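/- For all X, Y ∈ G_β, every 1 ≤ i ≤ N and every 1 ≤ k ≤ N, one has |Q_X(i)^k − Q_Y(i)^k| ≤ max(N⁴/β², N²/β)·‖X − Y‖₁; that is, X ↦ Q_X(i)^k is Lipschitz on G_β with a constant independent of i and k. -/

import Mathlib

/-- `m_X = ∑_{k=1}^N X(k)`. -/
noncomputable def mS (N : ℕ) (X : ℕ → ℝ) : ℝ := ∑ k ∈ Finset.Icc 1 N, X k

/-- `M_X = ∑_{k=1}^N k·X(k)`. -/
noncomputable def MS (N : ℕ) (X : ℕ → ℝ) : ℝ := ∑ k ∈ Finset.Icc 1 N, (k : ℝ) * X k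

/-- `Q_X(i) = (1/M_X)·∑_{k=i}^N k·X(k)`. -/
noncomputable def QS (N : ℕ) (X : ℕ → ℝ) (i : ℕ) : ℝ :=
  (∑ k ∈ Finset.Icc i N, (k : ℝ) * X k) / MS N X

/-- The 1-norm `‖X − Y‖₁ = ∑_{k=0}^N |X(k) − Y(k)|`. -/
noncomputable def norm1 (N : ℕ) (X Y : ℕ → ℝ) : ℝ :=
  ∑ k ∈ Finset.range (N + 1), |X k - Y k|

/-- Membership in the cube `[0,1]^{N+1}`. -/
def cube (N : ℕ) (X : ℕ → ℝ) : Prop := ∀ k ≤ N, 0 ≤ X k ∧ X k ≤ 1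

/-- `G_β = {X ∈ [0,1]^{N+1} : m_X ≥ β}`. -/
def Gset (N : ℕ) (β : ℝ) (X : ℕ → ℝ) : Prop := cube N X ∧ β ≤ mS N X

/-!
Splitting `M_X = A_X + B_X` into the mass `A_X` of the degrees `≥ i` and the rest gives
`Q_X(i) = A_X / (A_X + B_X)`. From `A_X B_Y - A_Y B_X = A_X (B_Y - B_X) + B_X (A_X - A_Y)` we get
`|Q_X(i) - Q_Y(i)| ≤ (|ΔA| + |ΔB|) / M_Y ≤ N ‖X - Y‖₁ / β`. As `Q_X(i), Q_Y(i) ∈ [0, 1]`, the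
`k`-th power costs at most a factor `k ≤ N`, which gives the constant `N² / β`.
-/

open Finset

theorem abs_pow_sub_pow_le_of_abs_le_one {a b : ℝ} (ha : |a| ≤ 1) (hb : |b| ≤ 1) (n : ℕ) :
    |a ^ n - b ^ n| ≤ n * |a - b| :=
  calc |a ^ n - b ^ n| ≤ |a - b| * n * max |a| |b| ^ (n - 1) := abs_pow_sub_pow_le a b n
    _ ≤ |a - b| * n * 1 := by gcongr; exact pow_le_one₀ (by positivity) (max_le ha hb)
    _ = n * |a - b| := by ring

theorem abs_div_add_sub_div_add_le {a b a' b' : ℝ} (ha : 0 ≤ a) (hb : 0 ≤ b) (hab : 0 < a + b)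
    (hab' : 0 < a' + b') :
    |a / (a + b) - a' / (a' + b')| ≤ (|a - a'| + |b - b'|) / (a' + b') := by
  have key : a / (a + b) - a' / (a' + b') =
      (a * (b' - b) + b * (a - a')) / ((a + b) * (a' + b')) := by
    field_simp
    ring
  rw [key, abs_div, abs_of_pos (mul_pos hab hab'), div_le_div_iff₀ (mul_pos hab hab') hab']
  calc |a * (b' - b) + b * (a - a')| * (a' + b')
      ≤ (a * |b - b'| + b * |a - a'|) * (a' + b') := by
        gcongr
        refine (abs_add_le _ _).trans_eq ?_
        rw [abs_mul, abs_mul, abs_of_nonneg ha, abs_of_nonneg hb, abs_sub_comm b']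
    _ ≤ (|a - a'| + |b - b'|) * (a + b) * (a' + b') := by
        gcongr ?_ * _
        nlinarith [mul_nonneg ha (abs_nonneg (a - a')), mul_nonneg hb (abs_nonneg (b - b'))]
    _ = (|a - a'| + |b - b'|) * ((a + b) * (a' + b')) := by ring

theorem abs_sum_filter_sub_add_abs_sum_filter_not_sub_le {ι : Type*} (s : Finset ι)
    (p : ι → Prop) [DecidablePred p] (f g : ι → ℝ) :
    |∑ k ∈ s with p k, f k - ∑ k ∈ s with p k, g k| +
        |∑ k ∈ s with ¬p k, f k - ∑ k ∈ s with ¬p k, g k| ≤ ∑ k ∈ s, |f k - g k| := by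
  simp only [← sum_sub_distrib]
  rw [← sum_filter_add_sum_filter_not s p]
  exact add_le_add (abs_sum_le_sum_abs _ _) (abs_sum_le_sum_abs _ _)

noncomputable def upperMass (N i : ℕ) (X : ℕ → ℝ) : ℝ :=
  ∑ k ∈ range (N + 1) with i ≤ k, (k : ℝ) * X k

noncomputable def lowerMass (N i : ℕ) (X : ℕ → ℝ) : ℝ :=
  ∑ k ∈ range (N + 1) with ¬i ≤ k, (k : ℝ) * X k

theorem MS_eq_sum_range (N : ℕ) (X : ℕ → ℝ) :
    MS N X = ∑ k ∈ range (N + 1), (k : ℝ) * X k := by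
  refine sum_subset (fun k hk => ?_) (fun k hk hk' => ?_)
  · simp only [mem_Icc, mem_range] at hk ⊢
    omega
  · simp only [mem_Icc, mem_range] at hk hk'
    simp [show k = 0 by omega]

theorem upperMass_add_lowerMass (N i : ℕ) (X : ℕ → ℝ) :
    upperMass N i X + lowerMass N i X = MS N X := by
  rw [upperMass, lowerMass, sum_filter_add_sum_filter_not, MS_eq_sum_range]

theorem QS_eq_upperMass_div (N i : ℕ) (X : ℕ → ℝ) :
    QS N X i = upperMass N i X / (upperMass N i X + lowerMass N i X) := by
  have : Icc i N = {k ∈ range (N + 1) | i ≤ k} := by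
    ext k
    simp only [mem_Icc, mem_filter, mem_range]
    omega
  rw [upperMass_add_lowerMass, QS, upperMass, this]

theorem abs_upperMass_sub_add_abs_lowerMass_sub_le (N i : ℕ) (X Y : ℕ → ℝ) :
    |upperMass N i X - upperMass N i Y| + |lowerMass N i X - lowerMass N i Y| ≤
      N * norm1 N X Y :=
  calc _ ≤ ∑ k ∈ range (N + 1), |(k : ℝ) * X k - k * Y k| :=
        abs_sum_filter_sub_add_abs_sum_filter_not_sub_le _ _ _ _
    _ ≤ ∑ k ∈ range (N + 1), (N : ℝ) * |X k - Y k| := sum_le_sum fun k hk => by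
        rw [← mul_sub, abs_mul, Nat.abs_cast]
        gcongr
        exact Nat.lt_succ_iff.mp (mem_range.mp hk)
    _ = N * norm1 N X Y := by rw [norm1, mul_sum]

section Cube

variable {N : ℕ} {X : ℕ → ℝ}

theorem sum_mul_nonneg_of_cube (hX : cube N X) (s : Finset ℕ) (hs : s ⊆ range (N + 1)) :
    0 ≤ ∑ k ∈ s, (k : ℝ) * X k :=
  sum_nonneg fun k hk =>
    mul_nonneg k.cast_nonneg (hX k (Nat.lt_succ_iff.mp (mem_range.mp (hs hk)))).1

theorem upperMass_nonneg (hX : cube N X) (i : ℕ) : 0 ≤ upperMass N i X :=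
  sum_mul_nonneg_of_cube hX _ (filter_subset _ _)

theorem lowerMass_nonneg (hX : cube N X) (i : ℕ) : 0 ≤ lowerMass N i X :=
  sum_mul_nonneg_of_cube hX _ (filter_subset _ _)

theorem abs_QS_le_one (hX : cube N X) (i : ℕ) : |QS N X i| ≤ 1 := by
  have hA := upperMass_nonneg hX i
  have hB := lowerMass_nonneg hX i
  rw [QS_eq_upperMass_div, abs_of_nonneg (by positivity)]
  exact div_le_one_of_le₀ (le_add_of_nonneg_right hB) (add_nonneg hA hB)

theorem mS_le_MS (hX : cube N X) : mS N X ≤ MS N X :=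
  sum_le_sum fun k hk => by
    rw [mem_Icc] at hk
    exact le_mul_of_one_le_left (hX k hk.2).1 (by exact_mod_cast hk.1)

end Cube

theorem QS_pow_lipschitz_general (N : ℕ) (β : ℝ) (hβ0 : 0 < β)
    (X Y : ℕ → ℝ) (hX : Gset N β X) (hY : Gset N β Y)
    (i : ℕ) (k : ℕ) (hkN : k ≤ N) :
    |QS N X i ^ k - QS N Y i ^ k| ≤
      max ((N : ℝ) ^ 4 / β ^ 2) ((N : ℝ) ^ 2 / β) * norm1 N X Y := by
  obtain ⟨hXc, hβX⟩ := hX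
  obtain ⟨hYc, hβY⟩ := hY
  have hMX : β ≤ upperMass N i X + lowerMass N i X := by
    rw [upperMass_add_lowerMass]; exact hβX.trans (mS_le_MS hXc)
  have hMY : β ≤ upperMass N i Y + lowerMass N i Y := by
    rw [upperMass_add_lowerMass]; exact hβY.trans (mS_le_MS hYc)
  have hnorm : 0 ≤ norm1 N X Y := sum_nonneg fun _ _ => abs_nonneg _
  have hQ : |QS N X i - QS N Y i| ≤ N * norm1 N X Y / β := by
    rw [QS_eq_upperMass_div, QS_eq_upperMass_div]
    refine (abs_div_add_sub_div_add_le (upperMass_nonneg hXc i) (lowerMass_nonneg hXc i)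
      (hβ0.trans_le hMX) (hβ0.trans_le hMY)).trans ?_
    exact div_le_div₀ (by positivity) (abs_upperMass_sub_add_abs_lowerMass_sub_le N i X Y) hβ0 hMY
  calc |QS N X i ^ k - QS N Y i ^ k| ≤ k * |QS N X i - QS N Y i| :=
        abs_pow_sub_pow_le_of_abs_le_one (abs_QS_le_one hXc i) (abs_QS_le_one hYc i) k
    _ ≤ N * (N * norm1 N X Y / β) := by gcongr
    _ = (N : ℝ) ^ 2 / β * norm1 N X Y := by ring
    _ ≤ max ((N : ℝ) ^ 4 / β ^ 2) ((N : ℝ) ^ 2 / β) * norm1 N X Y := by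
        gcongr
        exact le_max_right _ _

/-- For all `X, Y ∈ G_β`, all `1 ≤ i ≤ N` and all `1 ≤ k ≤ N`,
`|Q_X(i)^k − Q_Y(i)^k| ≤ max(N⁴/β², N²/β)·‖X − Y‖₁`: `X ↦ Q_X(i)^k` is Lipschitz
on `G_β` with a constant independent of `i` and `k`. -/
theorem QS_pow_lipschitz (N : ℕ) (hN : 1 ≤ N) (β : ℝ) (hβ0 : 0 < β) (hβ1 : β < 1)
    (X Y : ℕ → ℝ) (hX : Gset N β X) (hY : Gset N β Y)
    (i : ℕ) (hi1 : 1 ≤ i) (hiN : i ≤ N) (k : ℕ) (hk1 : 1 ≤ k) (hkN : k ≤ N) :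
    |QS N X i ^ k - QS N Y i ^ k| ≤
      max ((N : ℝ) ^ 4 / β ^ 2) ((N : ℝ) ^ 2 / β) * norm1 N X Y :=
  QS_pow_lipschitz_general N β hβ0 X Y hX hY i k hkN
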